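/- arXiv:1105.6187 — 3 statements merged into one kernel-verified Lean document; each statement's English description precedes it below -/
import Mathlib

section
/- Let X be a stable, conservative, non-explosive pure jump Markov process on a countable state space C ∪ {0}, with 0 absorbing and C a single transient class. Fix s ∈ C with p := inf_{k∈C} P_k[X hits s before 0] > 0 and T_k := E_k[τ_{{s,0}}] < ∞ for all k. For a probability distribution μ on C, let X^μ be the process that behaves like X on C but is instantaneously redistributed according to μ upon hitting 0, and let τ^μ_{{s}} be its first hitting time of s after leaving the starting set. Then, writing μ(T) := Σ_{k∈C} μ(k) T_k, one has μ(T) ≤ E^μ[τ^μ_{{s}}] ≤ μ(T)/p, where E^μ denotes expectation when X^μ(0) ∼ μ. -/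
/- Framework: a continuous-time Markov chain on a countable state space is given by
its jump rates `q : S → S → ℝ≥0∞`.  Hitting probabilities, expected hitting times
and occupation times (Green functions) are defined as the minimal nonnegative
solutions of the classical first-step systems, realised as pointwise infima over
all solutions. -/

open scoped ENNReal
open ENNReal

noncomputable section
open Classical
variable {S : Type*}

/-- Total jump rate out of a state. -/
def totalRate (q : S → S → ℝ≥0∞) (i : S) : ℝ≥0∞ := ∑' j, q i j

/-- Jump-chain transition probability. -/
def jumpP (q : S → S → ℝ≥0∞) (i j : S) : ℝ≥0∞ := q i j / totalRate q i

/-- `h` solves the first-step system for the probability of hitting `A` before `B`. -/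
def IsBeforeSol (q : S → S → ℝ≥0∞) (A B : Set S) (h : S → ℝ≥0∞) : Prop :=
  (∀ a ∈ A, h a = 1) ∧ (∀ b ∈ B, h b = 0) ∧
    (∀ j, j ∉ A → j ∉ B → h j = ∑' i, jumpP q j i * h i) ∧ (∀ j, h j ≤ 1)

/-- `P_k[X hits A before B]`: the minimal solution of the corresponding system. -/
def probBefore (q : S → S → ℝ≥0∞) (A B : Set S) (k : S) : ℝ≥0∞ :=
  ⨅ h ∈ {h | IsBeforeSol q A B h}, h k

/-- `T` solves the expected-hitting-time system for `A`. -/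
def IsHitTimeSol (q : S → S → ℝ≥0∞) (A : Set S) (T : S → ℝ≥0∞) : Prop :=
  (∀ a ∈ A, T a = 0) ∧
    ∀ j, j ∉ A → T j = (totalRate q j)⁻¹ + ∑' i, jumpP q j i * T i

/-- Expected hitting time of `A` from `k`: the minimal nonnegative solution. -/
def hitTime (q : S → S → ℝ≥0∞) (A : Set S) (k : S) : ℝ≥0∞ :=
  ⨅ T ∈ {T | IsHitTimeSol q A T}, T k

/-- Expected value of `τ_A` (first time in `A` after having been outside `A`)
starting from `k ∈ A`: hold at `k`, jump, then hit `A`. -/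
def retTime (q : S → S → ℝ≥0∞) (A : Set S) (k : S) : ℝ≥0∞ :=
  (totalRate q k)⁻¹ + ∑' i, jumpP q k i * hitTime q A i

/-- `T_k = E_k[τ_{{s,z}}]`, with the first-return convention on `{s,z}`. -/
def excT (q : S → S → ℝ≥0∞) (s z k : S) : ℝ≥0∞ :=
  if k = s ∨ k = z then retTime q {s, z} k else hitTime q {s, z} k

/-- `p_k = P_k[X_{τ_{{s,z}}} = s]`, the probability of reaching `s` before `z`. -/
def pHit (q : S → S → ℝ≥0∞) (s z k : S) : ℝ≥0∞ :=
  if k = s ∨ k = z then ∑' i, jumpP q k i * probBefore q {s} {z} i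
  else probBefore q {s} {z} k

/-- `p = inf_{k ∈ C} p_k`, the infimum over the non-cemetery states. -/
def pInf (q : S → S → ℝ≥0∞) (s z : S) : ℝ≥0∞ :=
  ⨅ k : {k : S // k ≠ z}, pHit q s z (k : S)

/-- Green-function system: expected time spent at `i` before hitting `A`. -/
def IsGreenSol (q : S → S → ℝ≥0∞) (A : Set S) (i : S) (G : S → ℝ≥0∞) : Prop :=
  (∀ a ∈ A, G a = 0) ∧
    ∀ j, j ∉ A →
      G j = (if j = i then (totalRate q j)⁻¹ else 0) + ∑' l, jumpP q j l * G l

/-- Expected time spent at `i` before hitting `A`, starting from `k`. -/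
def green (q : S → S → ℝ≥0∞) (A : Set S) (i k : S) : ℝ≥0∞ :=
  ⨅ G ∈ {G | IsGreenSol q A i G}, G k

/-- `T_{s i}`: expected time spent at `i` before `τ_{{s,z}}`, starting at `s`. -/
def occT (q : S → S → ℝ≥0∞) (s z i : S) : ℝ≥0∞ :=
  (if i = s then (totalRate q s)⁻¹ else 0) + ∑' j, jumpP q s j * green q {s, z} i j

/-- The returned process `X^μ`: `q^μ_{ij} = q_{ij} + q_{iz} μ_j` on `C = S \ {z}`;
the cemetery `z` becomes unreachable. -/
def retChain (q : S → S → ℝ≥0∞) (z : S) (μ : S → ℝ≥0∞) (i j : S) : ℝ≥0∞ :=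
  if i = z ∨ j = z then 0 else q i j + q i z * μ j

/-- `μ(T) = Σ_{k ∈ C} μ(k) T_k`. -/
def muT (q : S → S → ℝ≥0∞) (s z : S) (μ : S → ℝ≥0∞) : ℝ≥0∞ :=
  ∑' k, μ k * excT q s z k

/-- `π` is a stationary distribution of the chain with rates `q`. -/
def IsStationaryRates (q : S → S → ℝ≥0∞) (π : S → ℝ≥0∞) : Prop :=
  (∑' k, π k = 1) ∧ ∀ j, ∑' i, π i * q i j = π j * totalRate q j

/-- Total variation distance between two distributions on `S`. -/
def dTV (π ν : S → ℝ≥0∞) : ℝ≥0∞ := (∑' k, ((π k - ν k) + (ν k - π k))) / 2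

end

/-! Every quantity here is the minimal solution of its first-step system, i.e. the least fixed
point of a monotone operator, so it lies below every supersolution of that system.

Lower bound: off the cemetery `X^μ` jumps at the same total rate as `X` and at least as often
to every state of `C`, so the hitting time of `s` by `X^μ`, set to `0` at `z`, is a
supersolution for the hitting time of `{s, z}` by `X`.

Upper bound: put `B = μ(T)/p` and `W = E[τ_{s,z}] + (1 - P[hit s before z]) B`, with `W z = B`.
A jump of `X^μ` to a `μ`-distributed state costs on average at most
`Σ_k μ(k) (T_k + (1 - p_k) B) ≤ μ(T) + (1 - p) B = B`, so `W` is a supersolution for the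
hitting time of `s` by `X^μ`. This gives the renewal inequality `E_k τ^μ ≤ T_k + (1 - p_k) B`,
whose `μ`-average is at most `B`. -/

open scoped ENNReal
open Classical Function OrderHom

theorem iInf_mem_apply_eq_lfp {ι α : Type*} [CompleteLattice α] (f : (ι → α) →o (ι → α))
    {P : (ι → α) → Prop} (hlfp : P (lfp f)) (hP : ∀ h, P h → f h ≤ h) (k : ι) :
    ⨅ h ∈ {h | P h}, h k = lfp f k :=
  le_antisymm (iInf₂_le _ hlfp) (le_iInf₂ fun h hh => lfp_le f (hP h hh) k)

section FirstStep

variable {S : Type*} (q : S → S → ℝ≥0∞)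

theorem tsum_jumpP_mul (x : S → ℝ≥0∞) (j : S) :
    ∑' i, jumpP q j i * x i = (∑' i, q j i * x i) / totalRate q j := by
  simp only [jumpP, div_eq_mul_inv, mul_right_comm _ (totalRate q j)⁻¹, ENNReal.tsum_mul_right]

theorem tsum_jumpP_le_one (j : S) : ∑' i, jumpP q j i ≤ 1 := by
  simp only [jumpP, div_eq_mul_inv, ENNReal.tsum_mul_right]
  exact ENNReal.mul_inv_le_one (totalRate q j)

theorem tsum_jumpP_mul_le_one {x : S → ℝ≥0∞} (hx : ∀ i, x i ≤ 1) (j : S) :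
    ∑' i, jumpP q j i * x i ≤ 1 :=
  (ENNReal.tsum_le_tsum fun i => mul_le_of_le_one_right' (hx i)).trans (tsum_jumpP_le_one q j)

theorem tsum_jumpP_mul_one_sub_le {x : S → ℝ≥0∞} (hx : ∀ i, x i ≤ 1) (j : S) :
    ∑' i, jumpP q j i * (1 - x i) ≤ 1 - ∑' i, jumpP q j i * x i := by
  have hfin : ∑' i, jumpP q j i * x i ≠ ⊤ := ne_top_of_le_ne_top ENNReal.one_ne_top
    (tsum_jumpP_mul_le_one q hx j)
  refine ENNReal.le_sub_of_add_le_right hfin ?_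
  rw [← ENNReal.tsum_add]
  calc ∑' i, (jumpP q j i * (1 - x i) + jumpP q j i * x i) = ∑' i, jumpP q j i := by
        congr with i
        rw [← mul_add, tsub_add_cancel_of_le (hx i), mul_one]
    _ ≤ 1 := tsum_jumpP_le_one q j

noncomputable def firstStep (x : S → ℝ≥0∞) (j : S) : ℝ≥0∞ :=
  (totalRate q j)⁻¹ + ∑' i, jumpP q j i * x i

theorem firstStep_mono : Monotone (firstStep q) := fun _ _ h _ =>
  add_le_add le_rfl (ENNReal.tsum_le_tsum fun i => mul_le_mul_right (h i) _)

end FirstStep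

section HittingTime

variable {S : Type*} (q : S → S → ℝ≥0∞) (A : Set S)

noncomputable def hitTimeOp : (S → ℝ≥0∞) →o (S → ℝ≥0∞) where
  toFun T j := if j ∈ A then 0 else firstStep q T j
  monotone' _ _ h j := by
    dsimp only
    split_ifs
    exacts [le_rfl, firstStep_mono q h j]

theorem hitTimeOp_apply (T : S → ℝ≥0∞) (j : S) :
    hitTimeOp q A T j = if j ∈ A then 0 else firstStep q T j := rfl

theorem hitTimeOp_eq_self_iff {T : S → ℝ≥0∞} : hitTimeOp q A T = T ↔ IsHitTimeSol q A T := by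
  simp only [funext_iff, IsHitTimeSol, hitTimeOp_apply, firstStep]
  constructor
  · intro h
    exact ⟨fun a ha => by simpa [ha] using (h a).symm,
      fun j hj => by simpa [hj] using (h j).symm⟩
  · rintro ⟨hA, hAc⟩ j
    split_ifs with hj
    exacts [(hA j hj).symm, (hAc j hj).symm]

theorem hitTime_eq_lfp : hitTime q A = lfp (hitTimeOp q A) :=
  funext <| iInf_mem_apply_eq_lfp _ ((hitTimeOp_eq_self_iff q A).1 (map_lfp _))
    fun _ h => ((hitTimeOp_eq_self_iff q A).2 h).le

theorem hitTimeOp_hitTime : hitTimeOp q A (hitTime q A) = hitTime q A := by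
  rw [hitTime_eq_lfp]
  exact map_lfp _

theorem hitTime_le_of_hitTimeOp_le {U : S → ℝ≥0∞} (hU : hitTimeOp q A U ≤ U) :
    hitTime q A ≤ U := by
  rw [hitTime_eq_lfp]
  exact lfp_le _ hU

theorem retTime_eq_firstStep : retTime q A = firstStep q (hitTime q A) := rfl

theorem hitTime_of_mem {k : S} (hk : k ∈ A) : hitTime q A k = 0 := by
  simpa [hitTimeOp_apply, hk] using (congrFun (hitTimeOp_hitTime q A) k).symm

theorem hitTime_of_notMem {k : S} (hk : k ∉ A) : hitTime q A k = retTime q A k := by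
  simpa [hitTimeOp_apply, hk, retTime_eq_firstStep] using
    (congrFun (hitTimeOp_hitTime q A) k).symm

theorem excT_eq_retTime (s z k : S) : excT q s z k = retTime q {s, z} k := by
  unfold excT
  split_ifs with h
  · rfl
  · exact hitTime_of_notMem q _ (by simpa using h)

end HittingTime

section HittingProbability

variable {S : Type*} (q : S → S → ℝ≥0∞) (A B : Set S)

noncomputable def probBeforeOp : (S → ℝ≥0∞) →o (S → ℝ≥0∞) where
  toFun h j := if j ∈ A then 1 else if j ∈ B then 0 else ∑' i, jumpP q j i * h i
  monotone' _ _ h j := by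
    dsimp only
    split_ifs
    exacts [le_rfl, le_rfl, ENNReal.tsum_le_tsum fun i => mul_le_mul_right (h i) _]

theorem probBeforeOp_apply (h : S → ℝ≥0∞) (j : S) :
    probBeforeOp q A B h j =
      if j ∈ A then 1 else if j ∈ B then 0 else ∑' i, jumpP q j i * h i := rfl

theorem probBeforeOp_le_of_isBeforeSol {h : S → ℝ≥0∞} (hh : IsBeforeSol q A B h) :
    probBeforeOp q A B h ≤ h := by
  intro j
  rw [probBeforeOp_apply]
  split_ifs with hA hB
  exacts [(hh.1 j hA).ge, (hh.2.1 j hB).ge, (hh.2.2.1 j hA hB).ge]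

theorem isBeforeSol_lfp_probBeforeOp (hAB : Disjoint A B) :
    IsBeforeSol q A B (lfp (probBeforeOp q A B)) := by
  have hfix j := congrFun (map_lfp (probBeforeOp q A B)) j
  simp only [probBeforeOp_apply] at hfix
  refine ⟨fun a ha => by simpa [ha] using (hfix a).symm,
    fun b hb => by simpa [hb, hAB.notMem_of_mem_right hb] using (hfix b).symm,
    fun j hA hB => by simpa [hA, hB] using (hfix j).symm, fun j => ?_⟩
  refine lfp_le (probBeforeOp q A B) (a := 1) (fun j => ?_) j
  rw [probBeforeOp_apply]
  split_ifs
  exacts [le_rfl, zero_le_one, tsum_jumpP_mul_le_one q (fun _ => le_rfl) j]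

theorem isBeforeSol_probBefore (hAB : Disjoint A B) : IsBeforeSol q A B (probBefore q A B) := by
  have : probBefore q A B = lfp (probBeforeOp q A B) :=
    funext <| iInf_mem_apply_eq_lfp _ (isBeforeSol_lfp_probBeforeOp q A B hAB)
      fun _ => probBeforeOp_le_of_isBeforeSol q A B
  exact this ▸ isBeforeSol_lfp_probBeforeOp q A B hAB

variable {q} {s z : S}

theorem pHit_eq_tsum (hsz : s ≠ z) (k : S) :
    pHit q s z k = ∑' i, jumpP q k i * probBefore q {s} {z} i := by
  unfold pHit
  split_ifs with hk
  · rfl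
  · rw [not_or] at hk
    exact (isBeforeSol_probBefore q _ _ (Set.disjoint_singleton.2 hsz)).2.2.1 k hk.1 hk.2

theorem pHit_le_one (hsz : s ≠ z) (k : S) : pHit q s z k ≤ 1 :=
  pHit_eq_tsum hsz k ▸
    tsum_jumpP_mul_le_one q (isBeforeSol_probBefore q _ _ (Set.disjoint_singleton.2 hsz)).2.2.2 k

end HittingProbability

section ReturnedChain

variable {S : Type*} (q : S → S → ℝ≥0∞) {z : S} {μ : S → ℝ≥0∞}

theorem tsum_retChain_mul (hμz : μ z = 0) {j : S} (hj : j ≠ z) (x : S → ℝ≥0∞) :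
    ∑' i, retChain q z μ j i * x i = ∑' i, q j i * update x z (∑' k, μ k * x k) i := by
  have hsplit : ∀ i, retChain q z μ j i * x i
      = (if i = z then 0 else q j i * x i) + q j z * (μ i * x i) := by
    intro i
    rcases eq_or_ne i z with rfl | hi
    · simp [retChain, hμz]
    · simp [retChain, hj, hi, add_mul, mul_assoc]
  conv_rhs => rw [ENNReal.tsum_eq_add_tsum_ite z]
  rw [tsum_congr hsplit, ENNReal.tsum_add, ENNReal.tsum_mul_left, add_comm]
  congr 1
  · simp
  · exact tsum_congr fun i => by split_ifs with hi <;> simp [hi]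

theorem totalRate_retChain (hμz : μ z = 0) (hμ1 : ∑' k, μ k = 1) {j : S} (hj : j ≠ z) :
    totalRate (retChain q z μ) j = totalRate q j := by
  simpa [totalRate, hμ1] using tsum_retChain_mul q hμz hj 1

-- A jump of `X^μ` is a jump of `X` in which landing on the cemetery is replaced by
-- landing on a `μ`-distributed state.
theorem firstStep_retChain (hμz : μ z = 0) (hμ1 : ∑' k, μ k = 1) {j : S} (hj : j ≠ z)
    (x : S → ℝ≥0∞) :
    firstStep (retChain q z μ) x j = firstStep q (update x z (∑' k, μ k * x k)) j := by
  simp only [firstStep, tsum_jumpP_mul, totalRate_retChain q hμz hμ1 hj,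
    tsum_retChain_mul q hμz hj]

theorem firstStep_le_firstStep_retChain (hμz : μ z = 0) (hμ1 : ∑' k, μ k = 1) {j : S}
    (hj : j ≠ z) {x : S → ℝ≥0∞} (hx : x z = 0) :
    firstStep q x j ≤ firstStep (retChain q z μ) x j := by
  rw [firstStep_retChain q hμz hμ1 hj]
  refine firstStep_mono q (fun i => ?_) j
  rcases eq_or_ne i z with rfl | hi
  · simp [hx]
  · simp [hi]

end ReturnedChain

section LowerBound

variable {S : Type*} {q : S → S → ℝ≥0∞} {s z : S} {μ : S → ℝ≥0∞}

theorem excT_le_retTime_retChain (hμz : μ z = 0) (hμ1 : ∑' k, μ k = 1) {k : S} (hk : k ≠ z) :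
    excT q s z k ≤ retTime (retChain q z μ) {s} k := by
  set H' := hitTime (retChain q z μ) {s}
  set V := update H' z 0 with hV_def
  have hVH' : V ≤ H' := fun i => by
    rcases eq_or_ne i z with rfl | hi
    · simp [V]
    · simp [V, hi]
  have hV : hitTime q {s, z} ≤ V := by
    refine hitTime_le_of_hitTimeOp_le q _ fun j => ?_
    rw [hitTimeOp_apply]
    split_ifs with hj
    · exact zero_le
    simp only [Set.mem_insert_iff, Set.mem_singleton_iff, not_or] at hj
    calc firstStep q V j ≤ firstStep (retChain q z μ) V j :=
          firstStep_le_firstStep_retChain q hμz hμ1 hj.2 (update_self ..)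
      _ ≤ firstStep (retChain q z μ) H' j := firstStep_mono _ hVH' j
      _ = V j := by
        rw [hV_def, update_of_ne hj.2]
        exact (hitTime_of_notMem _ {s} hj.1).symm
  calc excT q s z k = firstStep q (hitTime q {s, z}) k := excT_eq_retTime q s z k
    _ ≤ firstStep q V k := firstStep_mono q hV k
    _ ≤ firstStep (retChain q z μ) V k :=
      firstStep_le_firstStep_retChain q hμz hμ1 hk (update_self ..)
    _ ≤ firstStep (retChain q z μ) H' k := firstStep_mono _ hVH' k

end LowerBound

section UpperBound

variable {S : Type*} {q : S → S → ℝ≥0∞} {s z : S} {μ : S → ℝ≥0∞}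

-- `E_i[τ_{s,z}] + B · P_i[X hits z before s]`, except that `1 - P_i[X hits s before z]` stands in
-- for the probability: it need only be a supersolution.
noncomputable def restartBound (q : S → S → ℝ≥0∞) (s z : S) (B : ℝ≥0∞) (i : S) : ℝ≥0∞ :=
  hitTime q {s, z} i + (1 - probBefore q {s} {z} i) * B

theorem restartBound_cemetery (hsz : s ≠ z) (B : ℝ≥0∞) : restartBound q s z B z = B := by
  simp [restartBound, hitTime_of_mem,
    (isBeforeSol_probBefore q {s} {z} (Set.disjoint_singleton.2 hsz)).2.1 z rfl]

theorem restartBound_eq {B : ℝ≥0∞} {i : S} (his : i ≠ s) (hiz : i ≠ z) :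
    restartBound q s z B i = excT q s z i + (1 - pHit q s z i) * B := by
  simp [restartBound, excT, pHit, his, hiz]

theorem restartBound_le (hsz : s ≠ z) {B : ℝ≥0∞} {i : S} (hiz : i ≠ z) :
    restartBound q s z B i ≤ excT q s z i + (1 - pHit q s z i) * B := by
  rcases eq_or_ne i s with rfl | his
  · simp [restartBound, hitTime_of_mem,
      (isBeforeSol_probBefore q {i} {z} (Set.disjoint_singleton.2 hsz)).1 i rfl]
  · exact (restartBound_eq his hiz).le

theorem firstStep_restartBound_le (hsz : s ≠ z) (B : ℝ≥0∞) (j : S) :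
    firstStep q (restartBound q s z B) j ≤ excT q s z j + (1 - pHit q s z j) * B := by
  have hg := isBeforeSol_probBefore q {s} {z} (Set.disjoint_singleton.2 hsz)
  calc firstStep q (restartBound q s z B) j
        = retTime q {s, z} j + (∑' i, jumpP q j i * (1 - probBefore q {s} {z} i)) * B := by
        simp only [firstStep, restartBound, retTime, mul_add, ENNReal.tsum_add, ← mul_assoc,
          ENNReal.tsum_mul_right, add_assoc]
    _ ≤ excT q s z j + (1 - pHit q s z j) * B := by
        rw [excT_eq_retTime, pHit_eq_tsum hsz]
        gcongr
        exact tsum_jumpP_mul_one_sub_le q hg.2.2.2 j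

theorem retTime_retChain_le (hsz : s ≠ z) (hμz : μ z = 0) (hμ1 : ∑' k, μ k = 1) {B : ℝ≥0∞}
    (hB : ∑' k, μ k * (excT q s z k + (1 - pHit q s z k) * B) ≤ B) {k : S} (hk : k ≠ z) :
    retTime (retChain q z μ) {s} k ≤ excT q s z k + (1 - pHit q s z k) * B := by
  -- `X^μ` never leaves `z`, so `⊤` is the only value at `z` a supersolution can take.
  set U := update (restartBound q s z B) z ⊤ with hU_def
  have hμU : ∑' i, μ i * U i ≤ B := by
    refine (ENNReal.tsum_le_tsum fun i => ?_).trans hB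
    rcases eq_or_ne i z with rfl | hiz
    · simp [hμz]
    · rw [hU_def, update_of_ne hiz]
      gcongr
      exact restartBound_le hsz hiz
  have hstep : ∀ j, j ≠ z →
      firstStep (retChain q z μ) U j ≤ excT q s z j + (1 - pHit q s z j) * B := by
    intro j hj
    refine le_trans ?_ (firstStep_restartBound_le hsz B j)
    rw [firstStep_retChain q hμz hμ1 hj, hU_def, update_idem]
    refine firstStep_mono q (fun i => ?_) j
    rcases eq_or_ne i z with rfl | hiz
    · simpa [restartBound_cemetery hsz] using hμU
    · simp [hiz]
  have hU : hitTime (retChain q z μ) {s} ≤ U := by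
    refine hitTime_le_of_hitTimeOp_le _ _ fun j => ?_
    rw [hitTimeOp_apply]
    split_ifs with hjs
    · exact zero_le
    rcases eq_or_ne j z with rfl | hjz
    · simp [U]
    · rw [hU_def, update_of_ne hjz, restartBound_eq hjs hjz]
      exact hstep j hjz
  exact (firstStep_mono _ hU k).trans (hstep k hk)

theorem tsum_mul_excT_add_le (hμz : μ z = 0) (hμ1 : ∑' k, μ k = 1) (B : ℝ≥0∞) :
    ∑' k, μ k * (excT q s z k + (1 - pHit q s z k) * B) ≤
      muT q s z μ + (1 - pInf q s z) * B := by
  have hterm : ∀ k, μ k * (excT q s z k + (1 - pHit q s z k) * B)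
      ≤ μ k * excT q s z k + μ k * ((1 - pInf q s z) * B) := by
    intro k
    rw [mul_add]
    rcases eq_or_ne k z with rfl | hk
    · simp [hμz]
    · gcongr
      exact iInf_le (fun k : {k // k ≠ z} => pHit q s z k) ⟨k, hk⟩
  calc _ ≤ ∑' k, (μ k * excT q s z k + μ k * ((1 - pInf q s z) * B)) :=
        ENNReal.tsum_le_tsum hterm
    _ = muT q s z μ + (1 - pInf q s z) * B := by
        rw [ENNReal.tsum_add, ENNReal.tsum_mul_right, hμ1, one_mul]
        rfl

end UpperBound

theorem stmt_0_general {S : Type*} (q : S → S → ℝ≥0∞) (z s : S)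
    (hsz : s ≠ z) (hp : 0 < pInf q s z)
    (μ : S → ℝ≥0∞) (hμz : μ z = 0) (hμ1 : ∑' k, μ k = 1) :
    muT q s z μ ≤ (∑' k, μ k * excT (retChain q z μ) s s k) ∧
      (∑' k, μ k * excT (retChain q z μ) s s k) ≤ muT q s z μ / pInf q s z := by
  have hexcT_retChain (k : S) :
      excT (retChain q z μ) s s k = retTime (retChain q z μ) {s} k := by
    rw [excT_eq_retTime, Set.pair_eq_singleton]
  refine ⟨ENNReal.tsum_le_tsum fun k => ?_, ?_⟩
  · rcases eq_or_ne k z with rfl | hk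
    · simp [hμz]
    · rw [hexcT_retChain]
      gcongr
      exact excT_le_retTime_retChain hμz hμ1 hk
  have hp1 : pInf q s z ≤ 1 := (iInf_le _ ⟨s, hsz⟩).trans (pHit_le_one hsz s)
  set B := muT q s z μ / pInf q s z
  have hB : ∑' k, μ k * (excT q s z k + (1 - pHit q s z k) * B) ≤ B :=
    calc _ ≤ muT q s z μ + (1 - pInf q s z) * B := tsum_mul_excT_add_le hμz hμ1 B
      _ = pInf q s z * B + (1 - pInf q s z) * B := by
        rw [ENNReal.mul_div_cancel hp.ne' (ne_top_of_le_ne_top ENNReal.one_ne_top hp1)]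
      _ = B := by rw [← add_mul, add_tsub_cancel_of_le hp1, one_mul]
  refine (ENNReal.tsum_le_tsum fun k => ?_).trans hB
  rcases eq_or_ne k z with rfl | hk
  · simp [hμz]
  · rw [hexcT_retChain]
    gcongr
    exact retTime_retChain_le hsz hμz hμ1 hB hk

/-- Lemma 2.2(i): under Condition B, `μ(T) ≤ E^μ[τ^μ_{s}] ≤ μ(T)/p`. -/
theorem stmt_0 {S : Type*} [Countable S] (q : S → S → ℝ≥0∞) (z s : S)
    (hsz : s ≠ z) (hq : ∀ k, totalRate q k ≠ ⊤) (hqz : totalRate q z = 0)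
    (hp : 0 < pInf q s z) (hT : ∀ k, k ≠ z → excT q s z k < ⊤)
    (μ : S → ℝ≥0∞) (hμz : μ z = 0) (hμ1 : ∑' k, μ k = 1) :
    muT q s z μ ≤ (∑' k, μ k * excT (retChain q z μ) s s k) ∧
      (∑' k, μ k * excT (retChain q z μ) s s k) ≤ muT q s z μ / pInf q s z :=
  stmt_0_general q z s hsz hp μ hμz hμ1
end

section
/- Under Condition B, let π^μ denote the stationary distribution of the returned process X^μ, and let C_ζ ⊆ C with s ∈ C_ζ satisfy Σ_{k∉C_ζ} T_{sk} ≤ ζ(1−p_s) T_s, where T_{sk} is the expected time spent in k before return to {s,0} starting from s and T_s = Σ_k T_{sk}. Then for every μ with μ(T) ≤ M T_s, one has π^μ(C \ C_ζ) ≤ (1−p_s)(ζ + M/p). -/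
/- Framework: a continuous-time Markov chain on a countable state space is given by
its jump rates `q : S → S → ℝ≥0∞`.  Hitting probabilities, expected hitting times
and occupation times (Green functions) are defined as the minimal nonnegative
solutions of the classical first-step systems, realised as pointwise infima over
all solutions. -/

open scoped ENNReal
open ENNReal

/-!
The flow `ν l = π l * q_l` of the stationary distribution is invariant for the jump chain of
`X^μ`. Since every state reaches `s` before `z` with probability at least `p > 0`, the returned
chain hits `s` almost surely, and the cycle formula `ν = ν_s γ` holds, where `γ` counts the
expected visits during an excursion from `s`. Such an excursion runs with the jump kernel `Q` of
`X` killed at `{s, z}` and restarts from `μ` at each passage through `z`; the expected number of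
restarts is at most `(1 - p_s) / p`, so `γ ≤ (δ_s + (1 - p_s) / p • μ) ∑ₙ Qⁿ`. Pairing with the
holding times `1 / q_k` on `C ∖ C_ζ` bounds `π (C ∖ C_ζ)` by
`ν_s (ζ (1 - p_s) T_s + (1 - p_s) / p * M T_s)`, and the normalisation of `π` gives `ν_s T_s ≤ 1`.
-/

noncomputable section

namespace ReturnedChain

open Classical Finset

variable {S : Type*}

/-- A kernel acts on functions through `kerOp K` and on measures through `kerOp (flip K)`. -/
def kerOp (K : S → S → ℝ≥0∞) : Module.End ℝ≥0∞ (S → ℝ≥0∞) where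
  toFun f j := ∑' l, K j l * f l
  map_add' f g := by ext j; simp only [Pi.add_apply, mul_add, ENNReal.tsum_add]
  map_smul' r f := by
    ext j
    simp only [Pi.smul_apply, smul_eq_mul, RingHom.id_apply, mul_left_comm, ENNReal.tsum_mul_left]

@[simp] lemma kerOp_apply (K : S → S → ℝ≥0∞) (f : S → ℝ≥0∞) (j : S) :
    kerOp K f j = ∑' l, K j l * f l := rfl

def pairing (m f : S → ℝ≥0∞) : ℝ≥0∞ := ∑' j, m j * f j

lemma pairing_mono {m m' f f' : S → ℝ≥0∞} (hm : m ≤ m') (hf : f ≤ f') :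
    pairing m f ≤ pairing m' f' :=
  ENNReal.tsum_le_tsum fun j => mul_le_mul' (hm j) (hf j)

lemma pairing_add_left (m m' f : S → ℝ≥0∞) :
    pairing (m + m') f = pairing m f + pairing m' f := by
  simp only [pairing, Pi.add_apply, add_mul, ENNReal.tsum_add]

lemma pairing_smul_left (r : ℝ≥0∞) (m f : S → ℝ≥0∞) :
    pairing (r • m) f = r * pairing m f := by
  simp only [pairing, Pi.smul_apply, smul_eq_mul, mul_assoc, ENNReal.tsum_mul_left]

lemma pairing_tsum_right {ι : Type*} (m : S → ℝ≥0∞) (f : ι → S → ℝ≥0∞) :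
    pairing m (fun j => ∑' i, f i j) = ∑' i, pairing m (f i) := by
  simp only [pairing, ← ENNReal.tsum_mul_left]
  exact ENNReal.tsum_comm

lemma pairing_tsum_left {ι : Type*} (m : ι → S → ℝ≥0∞) (f : S → ℝ≥0∞) :
    pairing (fun j => ∑' i, m i j) f = ∑' i, pairing (m i) f := by
  simp only [pairing, ← ENNReal.tsum_mul_right]
  exact ENNReal.tsum_comm

lemma pairing_single (s : S) (f : S → ℝ≥0∞) :
    pairing (Pi.single s 1) f = f s := by
  rw [pairing, tsum_eq_single s fun j hj => by simp [hj]]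
  simp

lemma kerOp_mono {K K' : S → S → ℝ≥0∞} {f f' : S → ℝ≥0∞} (hK : K ≤ K') (hf : f ≤ f') :
    kerOp K f ≤ kerOp K' f' :=
  fun j => ENNReal.tsum_le_tsum fun l => mul_le_mul' (hK j l) (hf l)

lemma kerOp_pow_mono {K K' : S → S → ℝ≥0∞} {f f' : S → ℝ≥0∞} (hK : K ≤ K') (hf : f ≤ f')
    (n : ℕ) : (kerOp K ^ n) f ≤ (kerOp K' ^ n) f' := by
  induction n with
  | zero => exact hf
  | succ n ih => rw [pow_succ', pow_succ']; exact kerOp_mono hK ih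

lemma kerOp_tsum {ι : Type*} (K : S → S → ℝ≥0∞) (c : ι → S → ℝ≥0∞) :
    kerOp K (fun l => ∑' i, c i l) = fun j => ∑' i, kerOp K (c i) j := by
  ext j
  simp only [kerOp_apply, ← ENNReal.tsum_mul_left]
  exact ENNReal.tsum_comm

lemma pairing_kerOp (m : S → ℝ≥0∞) (K : S → S → ℝ≥0∞) (f : S → ℝ≥0∞) :
    pairing m (kerOp K f) = pairing (kerOp (flip K) m) f := by
  simp only [pairing, kerOp_apply, flip, ← ENNReal.tsum_mul_left, ← ENNReal.tsum_mul_right]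
  rw [ENNReal.tsum_comm]
  exact tsum_congr fun l => tsum_congr fun j => by ring

lemma pairing_kerOp_pow (m : S → ℝ≥0∞) (K : S → S → ℝ≥0∞) (f : S → ℝ≥0∞) (n : ℕ) :
    pairing m ((kerOp K ^ n) f) = pairing ((kerOp (flip K) ^ n) m) f := by
  induction n generalizing f with
  | zero => rfl
  | succ n ih => rw [pow_succ, Module.End.mul_apply, ih, pow_succ', Module.End.mul_apply,
      pairing_kerOp]

lemma eq_sum_pow_add_pow {R M : Type*} [Semiring R] [AddCommMonoid M] [Module R M]
    (T : Module.End R M) {c e : M} (he : e = c + T e) (N : ℕ) :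
    e = ∑ n ∈ range N, (T ^ n) c + (T ^ N) e := by
  induction N with
  | zero => simp
  | succ N ih =>
    conv_lhs => rw [ih, he]
    rw [map_add, sum_range_succ, add_assoc, pow_succ, Module.End.mul_apply]

def potential (K : S → S → ℝ≥0∞) (c : S → ℝ≥0∞) (j : S) : ℝ≥0∞ :=
  ∑' n, (kerOp K ^ n) c j

lemma potential_eq_iSup (K : S → S → ℝ≥0∞) (c : S → ℝ≥0∞) (j : S) :
    potential K c j = ⨆ N, ∑ n ∈ range N, (kerOp K ^ n) c j :=
  ENNReal.tsum_eq_iSup_nat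

lemma potential_eq_add (K : S → S → ℝ≥0∞) (c : S → ℝ≥0∞) :
    potential K c = c + kerOp K (potential K c) := by
  ext j
  rw [potential, tsum_eq_zero_add' ENNReal.summable]
  simp only [pow_zero, Module.End.one_apply, pow_succ', Module.End.mul_apply, Pi.add_apply,
    kerOp_apply, potential, ← ENNReal.tsum_mul_left]
  rw [ENNReal.tsum_comm]

lemma potential_le_of_add_le {K : S → S → ℝ≥0∞} {c f : S → ℝ≥0∞} (hf : c + kerOp K f ≤ f) :
    potential K c ≤ f := by
  have partial_le : ∀ N, ∑ n ∈ range N, (kerOp K ^ n) c ≤ f := by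
    intro N
    induction N with
    | zero => simp
    | succ N ih =>
      rw [sum_range_succ', pow_zero, Module.End.one_apply, add_comm]
      simp only [pow_succ', Module.End.mul_apply, ← map_sum]
      exact le_trans (add_le_add le_rfl (kerOp_mono le_rfl ih)) hf
  intro j
  rw [potential_eq_iSup]
  exact iSup_le fun N => by simpa using partial_le N j

lemma potential_mono {K K' : S → S → ℝ≥0∞} {c c' : S → ℝ≥0∞} (hK : K ≤ K') (hc : c ≤ c') :
    potential K c ≤ potential K' c' :=
  fun j => ENNReal.tsum_le_tsum fun n => kerOp_pow_mono hK hc n j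

@[simp] lemma potential_zero (K : S → S → ℝ≥0∞) : potential K 0 = 0 := by
  ext j
  simp [potential]

lemma potential_add (K : S → S → ℝ≥0∞) (c c' : S → ℝ≥0∞) :
    potential K (c + c') = potential K c + potential K c' := by
  ext j
  simp only [potential, map_add, Pi.add_apply, ENNReal.tsum_add]

lemma potential_smul (K : S → S → ℝ≥0∞) (r : ℝ≥0∞) (c : S → ℝ≥0∞) :
    potential K (r • c) = r • potential K c := by
  ext j
  simp only [potential, map_smul, Pi.smul_apply, smul_eq_mul, ENNReal.tsum_mul_left]

lemma potential_tsum {ι : Type*} (K : S → S → ℝ≥0∞) (c : ι → S → ℝ≥0∞) :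
    potential K (fun l => ∑' i, c i l) = fun j => ∑' i, potential K (c i) j := by
  have pow_tsum : ∀ n,
      (kerOp K ^ n) (fun l => ∑' i, c i l) = fun j => ∑' i, (kerOp K ^ n) (c i) j := by
    intro n
    induction n with
    | zero => rfl
    | succ n ih => rw [pow_succ', Module.End.mul_apply, ih, kerOp_tsum]; rfl
  ext j
  simp only [potential, pow_tsum]
  exact ENNReal.tsum_comm

lemma pairing_potential_flip (K : S → S → ℝ≥0∞) (ρ f : S → ℝ≥0∞) :
    pairing (potential (flip K) ρ) f = pairing ρ (potential K f) := by
  unfold potential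
  rw [pairing_tsum_left, pairing_tsum_right]
  simp only [pairing_kerOp_pow]


lemma apply_eq_sum_add_pow_apply {K : S → S → ℝ≥0∞} {c e : S → ℝ≥0∞}
    (he : e = c + kerOp K e) (N : ℕ) (j : S) :
    e j = ∑ n ∈ range N, (kerOp K ^ n) c j + (kerOp K ^ N) e j := by
  simpa only [Pi.add_apply, Finset.sum_apply] using congrFun (eq_sum_pow_add_pow _ he N) j

lemma eq_potential_add_iInf {K : S → S → ℝ≥0∞} {c e : S → ℝ≥0∞} (he : e = c + kerOp K e) :
    e = potential K c + fun j => ⨅ N, (kerOp K ^ N) e j := by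
  have tele := apply_eq_sum_add_pow_apply he
  ext j
  apply le_antisymm
  · rw [Pi.add_apply, ENNReal.add_iInf]
    refine le_iInf fun N => (tele N j).trans_le (add_le_add ?_ le_rfl)
    rw [potential_eq_iSup]
    exact le_iSup (fun N => ∑ n ∈ range N, (kerOp K ^ n) c j) N
  · rw [Pi.add_apply, potential_eq_iSup, ENNReal.iSup_add]
    exact iSup_le fun N => (add_le_add le_rfl (iInf_le _ N)).trans (tele N j).ge

lemma kerOp_iInf_pow_le {K : S → S → ℝ≥0∞} {e : S → ℝ≥0∞} (he : kerOp K e ≤ e) :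
    kerOp K (fun j => ⨅ N, (kerOp K ^ N) e j) ≤ fun j => ⨅ N, (kerOp K ^ N) e j := by
  intro j
  refine le_iInf fun N => ?_
  have h_le : (fun j => ⨅ N, (kerOp K ^ N) e j) ≤ (kerOp K ^ N) e := fun j => iInf_le _ N
  calc kerOp K (fun j => ⨅ N, (kerOp K ^ N) e j) j ≤ kerOp K ((kerOp K ^ N) e) j :=
        kerOp_mono le_rfl h_le j
    _ = (kerOp K ^ N) (kerOp K e) j := by rw [← Module.End.mul_apply, ← pow_succ', pow_succ]; rfl
    _ ≤ (kerOp K ^ N) e j := kerOp_pow_mono le_rfl he N j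

lemma pairing_potential_eq_zero {K : S → S → ℝ≥0∞} {r a : S → ℝ≥0∞}
    (hr : kerOp (flip K) r ≤ r) (hra : pairing r a = 0) : pairing r (potential K a) = 0 := by
  have pow_le : ∀ n, (kerOp (flip K) ^ n) r ≤ r := by
    intro n
    induction n with
    | zero => exact le_rfl
    | succ n ih => rw [pow_succ', Module.End.mul_apply]; exact (kerOp_mono le_rfl ih).trans hr
  unfold potential
  rw [pairing_tsum_right, ENNReal.tsum_eq_zero]
  intro n
  rw [pairing_kerOp_pow]
  exact le_antisymm (hra ▸ pairing_mono (pow_le n) le_rfl) bot_le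

lemma potential_eq_of_smul_le {K : S → S → ℝ≥0∞} {a e : S → ℝ≥0∞} (he : e = a + kerOp K e)
    (he_top : ∀ j, e j ≠ ∞) {p : ℝ≥0∞} (hp : p ≠ 0) (hpe : p • e ≤ potential K a) :
    potential K a = e := by
  set h := potential K a
  have h_le : h ≤ e := potential_le_of_add_le he.ge
  ext j
  refine le_antisymm (h_le j) ?_
  have h_tele : ∀ N j, h j = ∑ n ∈ range N, (kerOp K ^ n) a j + (kerOp K ^ N) h j :=
    apply_eq_sum_add_pow_apply (potential_eq_add K a)
  -- `h ≥ H_N + p (e - h)` for the partial sums `H_N` of `h`, since `e - h ≤ Kᴺ e`; let `N → ∞`.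
  have key : ∀ N, ∑ n ∈ range N, (kerOp K ^ n) a j + p * (e j - h j) ≤ h j := by
    intro N
    have partial_le : ∑ n ∈ range N, (kerOp K ^ n) a j ≤ h j := by
      rw [h_tele N j]; exact le_self_add
    have tail : e j - h j ≤ (kerOp K ^ N) e j := by
      rw [tsub_le_iff_left]
      exact (apply_eq_sum_add_pow_apply he N j).le.trans (add_le_add partial_le le_rfl)
    calc ∑ n ∈ range N, (kerOp K ^ n) a j + p * (e j - h j)
        ≤ ∑ n ∈ range N, (kerOp K ^ n) a j + (kerOp K ^ N) (p • e) j := by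
          rw [map_smul, Pi.smul_apply, smul_eq_mul]; gcongr
      _ ≤ ∑ n ∈ range N, (kerOp K ^ n) a j + (kerOp K ^ N) h j := by
          gcongr; exact kerOp_pow_mono le_rfl hpe N j
      _ = h j := (h_tele N j).symm
  have h_fin : h j ≠ ∞ := ne_top_of_le_ne_top (he_top j) (h_le j)
  have : h j + p * (e j - h j) ≤ h j + 0 :=
    calc h j + p * (e j - h j)
        = (⨆ N, ∑ n ∈ range N, (kerOp K ^ n) a j) + p * (e j - h j) := by
          rw [← potential_eq_iSup]
      _ = ⨆ N, (∑ n ∈ range N, (kerOp K ^ n) a j + p * (e j - h j)) := ENNReal.iSup_add _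
      _ ≤ h j + 0 := by rw [add_zero]; exact iSup_le key
  have h0 := (ENNReal.add_le_add_iff_left h_fin).1 this
  rw [nonpos_iff_eq_zero, mul_eq_zero] at h0
  exact tsub_eq_zero_iff_le.1 (h0.resolve_left hp)

lemma potential_flip_le_of_le_add {Q B : S → S → ℝ≥0∞} {d m : S → ℝ≥0∞}
    (hB : ∀ j l, B j l ≤ Q j l + d j * m l) (ρ : S → ℝ≥0∞) {β : ℝ≥0∞}
    (hβ : pairing (potential (flip Q) (ρ + β • m)) d ≤ β) :
    potential (flip B) ρ ≤ potential (flip Q) (ρ + β • m) := by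
  set V := potential (flip Q) (ρ + β • m)
  refine potential_le_of_add_le fun l => ?_
  have hBV : kerOp (flip B) V l ≤ kerOp (flip Q) V l + β * m l :=
    calc kerOp (flip B) V l ≤ ∑' j, (Q j l * V j + V j * d j * m l) :=
          ENNReal.tsum_le_tsum fun j => by
            simp only [flip]
            calc B j l * V j ≤ (Q j l + d j * m l) * V j := by gcongr; exact hB j l
              _ = _ := by ring
      _ = kerOp (flip Q) V l + pairing V d * m l := by
          rw [ENNReal.tsum_add, ENNReal.tsum_mul_right]; rfl
      _ ≤ kerOp (flip Q) V l + β * m l := by gcongr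
  calc ρ l + kerOp (flip B) V l ≤ ρ l + (kerOp (flip Q) V l + β * m l) := by gcongr
    _ = (ρ + β • m + kerOp (flip Q) V) l := by
        simp only [Pi.add_apply, Pi.smul_apply, smul_eq_mul]; ring
    _ = V l := by rw [← potential_eq_add]

def taboo (D : Set S) (K : S → S → ℝ≥0∞) (j l : S) : ℝ≥0∞ := if l ∈ D then 0 else K j l

lemma kerOp_taboo_congr {P : S → S → ℝ≥0∞} {D : Set S} {f g : S → ℝ≥0∞}
    (hfg : ∀ l ∉ D, f l = g l) : kerOp (taboo D P) f = kerOp (taboo D P) g := by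
  ext j
  refine tsum_congr fun l => ?_
  by_cases hl : l ∈ D
  · simp [taboo, hl]
  · rw [hfg l hl]

lemma tsum_mul_eq_add_taboo (K : S → S → ℝ≥0∞) (s : S) (f : S → ℝ≥0∞) (j : S) :
    ∑' l, K j l * f l = K j s * f s + kerOp (taboo {s} K) f j := by
  rw [ENNReal.tsum_eq_add_tsum_ite s]
  congr 1
  exact tsum_congr fun l => by by_cases hl : l = s <;> simp [taboo, hl]

lemma eq_smul_single_add_kerOp_flip_taboo {R : S → S → ℝ≥0∞} {ν : S → ℝ≥0∞}
    (hν : kerOp (flip R) ν = ν) (s : S) :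
    ν = ν s • Pi.single s 1 + kerOp (flip (taboo {s} R)) ν := by
  ext l
  by_cases hl : l = s
  · subst hl; simp [taboo, flip]
  · conv_lhs => rw [← hν]
    simp [taboo, flip, hl]

-- Riesz decomposition `ν = ν s • γ + r`; pairing the excessive part `r` with the probability
-- of hitting `s`, which is `1` on the support of `ν`, shows `r = 0`.
lemma cycle_formula {R : S → S → ℝ≥0∞} {ν : S → ℝ≥0∞} {s : S}
    (hν : kerOp (flip R) ν = ν) (hνs : ν s ≠ ∞)
    (hrec : ∀ l, ν l ≠ 0 → potential (taboo {s} R) (fun j => R j s) l = 1) :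
    ν = ν s • potential (flip (taboo {s} R)) (Pi.single s 1) := by
  set K := taboo {s} R
  set a : S → ℝ≥0∞ := fun j => R j s
  have hsplit := eq_smul_single_add_kerOp_flip_taboo hν s
  have hTν : kerOp (flip K) ν ≤ ν := fun l => by
    conv_rhs => rw [hsplit]
    exact le_add_self
  set r : S → ℝ≥0∞ := fun j => ⨅ N, (kerOp (flip K) ^ N) ν j
  have hdecomp : ν = ν s • potential (flip K) (Pi.single s 1) + r := by
    rw [← potential_smul]; exact eq_potential_add_iInf hsplit
  have hra : pairing r a = 0 := by
    have hνa : pairing ν a = ν s := by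
      conv_rhs => rw [← hν]
      simp only [pairing, kerOp_apply, flip, a, mul_comm]
    have hγa : pairing (ν s • potential (flip K) (Pi.single s 1)) a = ν s := by
      rw [pairing_smul_left, pairing_potential_flip, pairing_single]
      by_cases h0 : ν s = 0
      · rw [h0, zero_mul]
      · rw [hrec s h0, mul_one]
    have h := congrArg (pairing · a) hdecomp
    simp only [pairing_add_left, hνa, hγa] at h
    exact ((ENNReal.add_right_inj hνs).1 (by rwa [add_zero])).symm
  have hrh := pairing_potential_eq_zero (kerOp_iInf_pow_le hTν) hra
  have hr : r = 0 := by
    ext l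
    rw [Pi.zero_apply, ← nonpos_iff_eq_zero]
    by_cases hl : ν l = 0
    · rw [← hl]
      conv_rhs => rw [hdecomp]
      exact le_add_self
    · calc r l = r l * potential K a l := by rw [hrec l hl, mul_one]
        _ ≤ pairing r (potential K a) := ENNReal.le_tsum l
        _ = 0 := hrh
  conv_lhs => rw [hdecomp, hr, add_zero]

lemma kerOp_taboo_piecewise {P : S → S → ℝ≥0∞} {D : Set S} [∀ j, Decidable (j ∈ D)]
    (b g : S → ℝ≥0∞) : kerOp (taboo D P) (D.piecewise b g) = kerOp (taboo D P) g :=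
  kerOp_taboo_congr fun _ hl => Set.piecewise_eq_of_notMem _ _ _ hl

lemma piecewise_potential_taboo {P : S → S → ℝ≥0∞} {D : Set S} [∀ j, Decidable (j ∈ D)]
    (b c : S → ℝ≥0∞) {j : S} (hj : j ∉ D) :
    D.piecewise b (potential (taboo D P) c) j =
      c j + kerOp (taboo D P) (D.piecewise b (potential (taboo D P) c)) j := by
  rw [Set.piecewise_eq_of_notMem _ _ _ hj, kerOp_taboo_piecewise]
  conv_lhs => rw [potential_eq_add]
  rfl

lemma iInf_eq_piecewise_potential {P : S → S → ℝ≥0∞} {D : Set S} {b c : S → ℝ≥0∞}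
    {X : Set (S → ℝ≥0∞)} [∀ j, Decidable (j ∈ D)]
    (hX : ∀ f ∈ X, (∀ j ∈ D, f j = b j) ∧ ∀ j ∉ D, f j = c j + kerOp (taboo D P) f j)
    (hmem : D.piecewise b (potential (taboo D P) c) ∈ X) (k : S) :
    ⨅ f ∈ X, f k = D.piecewise b (potential (taboo D P) c) k := by
  refine le_antisymm (iInf₂_le _ hmem) (le_iInf₂ fun f hf => ?_)
  by_cases hk : k ∈ D
  · rw [Set.piecewise_eq_of_mem _ _ _ hk, (hX f hf).1 k hk]
  rw [Set.piecewise_eq_of_notMem _ _ _ hk]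
  -- `f` only solves the system off `D`; setting it to `⊤` on `D` makes it a global supersolution.
  have hsuper : c + kerOp (taboo D P) (D.piecewise ⊤ f) ≤ D.piecewise ⊤ f := by
    intro j
    rw [Pi.add_apply, kerOp_taboo_piecewise]
    by_cases hj : j ∈ D
    · simp [hj]
    · rw [Set.piecewise_eq_of_notMem _ _ _ hj, (hX f hf).2 j hj]
  simpa [hk] using potential_le_of_add_le hsuper k

lemma tsum_jumpP (q : S → S → ℝ≥0∞) (j : S) :
    ∑' i, jumpP q j i = totalRate q j / totalRate q j := by
  simp only [jumpP, div_eq_mul_inv, ENNReal.tsum_mul_right, totalRate]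

lemma kerOp_flip_jumpP_of_isStationaryRates {q : S → S → ℝ≥0∞} {π : S → ℝ≥0∞}
    (hπ : IsStationaryRates q π) (hq : ∀ k, totalRate q k ≠ ∞) :
    kerOp (flip (jumpP q)) (fun l => π l * totalRate q l) = fun l => π l * totalRate q l := by
  ext l
  rw [← hπ.2 l, kerOp_apply]
  refine tsum_congr fun i => ?_
  have hqi : q i l = 0 ∨ totalRate q i ≠ 0 := by
    by_cases h0 : totalRate q i = 0
    · exact Or.inl (ENNReal.tsum_eq_zero.1 h0 l)
    · exact Or.inr h0
  simp only [flip, jumpP]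
  rw [mul_left_comm, ENNReal.div_mul_cancel' (fun h0 => hqi.resolve_right (not_not.2 h0))
    (fun h => absurd h (hq i))]

variable {q : S → S → ℝ≥0∞} {s z : S} {μ : S → ℝ≥0∞}

lemma tsum_jumpP_mul_eq_add_taboo (hsz : s ≠ z) (f : S → ℝ≥0∞) (j : S) :
    ∑' i, jumpP q j i * f i =
      jumpP q j s * f s + jumpP q j z * f z + kerOp (taboo {s, z} (jumpP q)) f j := by
  rw [ENNReal.tsum_eq_add_tsum_ite s, ENNReal.tsum_eq_add_tsum_ite z, if_neg hsz.symm,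
    add_assoc]
  congr 2
  refine tsum_congr fun l => ?_
  by_cases hlz : l = z
  · simp [taboo, hlz]
  · by_cases hls : l = s <;> simp [taboo, hls, hlz]

lemma potential_jumpP_add_le_one (hsz : s ≠ z) :
    potential (taboo {s, z} (jumpP q)) (fun j => jumpP q j s + jumpP q j z) ≤ 1 := by
  refine potential_le_of_add_le fun j => ?_
  have h := tsum_jumpP_mul_eq_add_taboo (q := q) hsz 1 j
  simp only [Pi.one_apply, mul_one] at h
  calc _ = ∑' i, jumpP q j i := by rw [h]; rfl
    _ ≤ 1 := (tsum_jumpP q j).trans_le ENNReal.div_self_le_one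

lemma probBefore_eq (hsz : s ≠ z) :
    probBefore q {s} {z} = ({s, z} : Set S).piecewise (Pi.single s 1)
      (potential (taboo {s, z} (jumpP q)) (fun j => jumpP q j s)) := by
  ext k
  refine iInf_eq_piecewise_potential (X := {f | IsBeforeSol q {s} {z} f})
    (fun f hf => ⟨fun j hj => ?_, fun j hj => ?_⟩) ⟨?_, ?_, fun j hjs hjz => ?_, fun j => ?_⟩ k
  · rcases hj with rfl | rfl
    · simp [hf.1 j rfl]
    · simp [hf.2.1 j rfl, hsz.symm]
  · simp only [Set.mem_insert_iff, Set.mem_singleton_iff, not_or] at hj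
    rw [hf.2.2.1 j hj.1 hj.2, tsum_jumpP_mul_eq_add_taboo hsz, hf.1 s rfl, hf.2.1 z rfl]
    simp
  · simp
  · simp [hsz.symm]
  · have hj : j ∉ ({s, z} : Set S) := by simp_all
    rw [tsum_jumpP_mul_eq_add_taboo hsz, piecewise_potential_taboo _ _ hj]
    simp [hsz.symm]
  · by_cases hj : j ∈ ({s, z} : Set S)
    · rcases hj with rfl | rfl <;> simp [Pi.single_apply, apply_ite (· ≤ (1 : ℝ≥0∞))]
    · rw [Set.piecewise_eq_of_notMem _ _ _ hj]
      exact (potential_mono le_rfl (fun l => le_self_add) j).trans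
        (potential_jumpP_add_le_one hsz j)

lemma hitTime_eq (hsz : s ≠ z) :
    hitTime q {s, z} = ({s, z} : Set S).piecewise (0 : S → ℝ≥0∞)
      (potential (taboo {s, z} (jumpP q)) (fun j => (totalRate q j)⁻¹)) := by
  ext k
  refine iInf_eq_piecewise_potential (X := {f | IsHitTimeSol q {s, z} f})
    (fun f hf => ⟨hf.1, fun j hj => ?_⟩) ⟨fun j hj => ?_, fun j hj => ?_⟩ k
  · rw [hf.2 j hj, tsum_jumpP_mul_eq_add_taboo hsz, hf.1 s (by simp), hf.1 z (by simp)]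
    simp
  · simp [hj]
  · rw [tsum_jumpP_mul_eq_add_taboo hsz, piecewise_potential_taboo _ _ hj]
    simp

lemma green_eq (hsz : s ≠ z) (i : S) :
    green q {s, z} i = ({s, z} : Set S).piecewise (0 : S → ℝ≥0∞)
      (potential (taboo {s, z} (jumpP q)) (fun j => if j = i then (totalRate q j)⁻¹ else 0)) := by
  ext k
  refine iInf_eq_piecewise_potential (X := {f | IsGreenSol q {s, z} i f})
    (fun f hf => ⟨hf.1, fun j hj => ?_⟩) ⟨fun j hj => ?_, fun j hj => ?_⟩ k
  · rw [hf.2 j hj, tsum_jumpP_mul_eq_add_taboo hsz, hf.1 s (by simp), hf.1 z (by simp)]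
    simp
  · simp [hj]
  · rw [tsum_jumpP_mul_eq_add_taboo hsz, piecewise_potential_taboo _ _ hj]
    simp

lemma pHit_eq (hsz : s ≠ z) {k : S} (hk : k ≠ z) :
    pHit q s z k = potential (taboo {s, z} (jumpP q)) (fun j => jumpP q j s) k := by
  by_cases hks : k = s
  · subst hks
    rw [pHit, if_pos (Or.inl rfl), probBefore_eq hsz, tsum_jumpP_mul_eq_add_taboo hsz,
      kerOp_taboo_piecewise]
    conv_rhs => rw [potential_eq_add]
    simp [hsz.symm]
  · rw [pHit, if_neg (by tauto), probBefore_eq hsz,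
      Set.piecewise_eq_of_notMem _ _ _ (by simp [hks, hk])]

lemma occT_eq (hsz : s ≠ z) (i : S) :
    occT q s z i =
      potential (taboo {s, z} (jumpP q)) (fun j => if j = i then (totalRate q j)⁻¹ else 0) s := by
  rw [occT, green_eq hsz, tsum_jumpP_mul_eq_add_taboo hsz,
    kerOp_taboo_piecewise]
  conv_rhs => rw [potential_eq_add]
  simp [eq_comm]

lemma excT_eq (hsz : s ≠ z) {k : S} (hk : k ∉ ({s, z} : Set S)) :
    excT q s z k = potential (taboo {s, z} (jumpP q)) (fun j => (totalRate q j)⁻¹) k := by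
  rw [excT, if_neg (by simpa using hk), hitTime_eq hsz, Set.piecewise_eq_of_notMem _ _ _ hk]

lemma tsum_occT_subtype (hsz : s ≠ z) (A : Set S) :
    ∑' k : A, occT q s z k =
      potential (taboo {s, z} (jumpP q)) (A.indicator fun j => (totalRate q j)⁻¹) s := by
  have hsource : A.indicator (fun j => (totalRate q j)⁻¹) =
      fun j => ∑' i, A.indicator (fun i j => if j = i then (totalRate q j)⁻¹ else 0) i j := by
    ext j
    rw [tsum_eq_single j fun i hi => by by_cases hiA : i ∈ A <;> simp [hiA, Ne.symm hi]]
    by_cases hjA : j ∈ A <;> simp [hjA]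
  rw [_root_.tsum_subtype, hsource, potential_tsum]
  refine tsum_congr fun i => ?_
  by_cases hiA : i ∈ A <;> simp [hiA, occT_eq hsz]

lemma pHit_le_one (hsz : s ≠ z) {k : S} (hk : k ≠ z) : pHit q s z k ≤ 1 := by
  rw [pHit_eq hsz hk]
  exact (potential_mono le_rfl (fun j => le_self_add) k).trans (potential_jumpP_add_le_one hsz k)

lemma potential_jumpP_cemetery_le (hsz : s ≠ z) {l : S} (hl : l ≠ z) :
    potential (taboo {s, z} (jumpP q)) (fun j => jumpP q j z) l ≤ 1 - pHit q s z l := by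
  have hsum := potential_jumpP_add_le_one (q := q) hsz l
  rw [show (fun j => jumpP q j s + jumpP q j z) = (fun j => jumpP q j s) + fun j => jumpP q j z
    from rfl, potential_add, Pi.add_apply, ← pHit_eq hsz hl] at hsum
  exact ENNReal.le_sub_of_add_le_left (ne_top_of_le_ne_top ENNReal.one_ne_top
    (le_self_add.trans hsum)) hsum

lemma tsum_occT (hsz : s ≠ z) :
    ∑' k, occT q s z k = potential (taboo {s, z} (jumpP q)) (fun j => (totalRate q j)⁻¹) s := by
  rw [← tsum_univ, tsum_occT_subtype hsz, Set.indicator_univ]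

lemma pairing_potential_le_muT (hsz : s ≠ z) :
    pairing (({s, z} : Set S)ᶜ.indicator μ)
      (potential (taboo {s, z} (jumpP q)) (fun j => (totalRate q j)⁻¹)) ≤ muT q s z μ :=
  ENNReal.tsum_le_tsum fun k => by
    by_cases hk : k ∈ ({s, z} : Set S)
    · simp [hk]
    · rw [Set.indicator_of_mem (Set.mem_compl hk), excT_eq hsz hk]


lemma totalRate_retChain (hμz : μ z = 0) (hμ1 : ∑' k, μ k = 1) {j : S} (hj : j ≠ z) :
    totalRate (retChain q z μ) j = totalRate q j := by
  have hμ : ∑' l, (if l = z then 0 else μ l) = 1 := by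
    rw [← hμ1, ENNReal.tsum_eq_add_tsum_ite (f := μ) z, hμz, zero_add]
  calc totalRate (retChain q z μ) j
      = ∑' l, (if l = z then 0 else q j l) + q j z * ∑' l, (if l = z then 0 else μ l) := by
        rw [totalRate, ← ENNReal.tsum_mul_left, ← ENNReal.tsum_add]
        exact tsum_congr fun l => by by_cases hl : l = z <;> simp [retChain, hl, hj]
    _ = totalRate q j := by
        rw [hμ, mul_one, add_comm, totalRate, ENNReal.tsum_eq_add_tsum_ite (f := q j) z]

lemma jumpP_retChain (hqz : totalRate q z = 0) (hμz : μ z = 0) (hμ1 : ∑' k, μ k = 1) {l : S}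
    (hl : l ≠ z) (j : S) :
    jumpP (retChain q z μ) j l = jumpP q j l + jumpP q j z * μ l := by
  by_cases hj : j = z
  · subst hj
    simp [jumpP, retChain, ENNReal.tsum_eq_zero.1 hqz]
  · rw [jumpP, totalRate_retChain hμz hμ1 hj, retChain, if_neg (by tauto), ENNReal.add_div,
      ENNReal.mul_div_right_comm]
    rfl

lemma taboo_jumpP_retChain (hsz : s ≠ z) (hqz : totalRate q z = 0) (hμz : μ z = 0)
    (hμ1 : ∑' k, μ k = 1) (j l : S) :
    taboo {s} (jumpP (retChain q z μ)) j l =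
      taboo {s, z} (jumpP q) j l + jumpP q j z * ({s, z} : Set S)ᶜ.indicator μ l := by
  by_cases hls : l = s
  · simp [taboo, hls]
  by_cases hlz : l = z
  · simp [taboo, hlz, hsz.symm, jumpP, retChain]
  · have hl : l ∉ ({s, z} : Set S) := by simp [hls, hlz]
    simp only [taboo, Set.mem_singleton_iff, hls, if_false, hl, Set.indicator_of_mem
      (Set.mem_compl hl), jumpP_retChain hqz hμz hμ1 hlz]

lemma totalRate_ne_zero_of_pInf_pos (hsz : s ≠ z) (hp : 0 < pInf q s z) {j : S} (hj : j ≠ z) :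
    totalRate q j ≠ 0 := by
  intro h0
  have hjump : ∀ l, jumpP q j l = 0 := fun l => by
    simp [jumpP, ENNReal.tsum_eq_zero.1 h0 l]
  have hpot : potential (taboo {s, z} (jumpP q)) (fun j => jumpP q j s) j = 0 := by
    rw [potential_eq_add]
    simp [hjump, taboo]
  have hle : pInf q s z ≤ pHit q s z j := iInf_le (fun k : {k : S // k ≠ z} => pHit q s z k) ⟨j, hj⟩
  rw [pHit_eq hsz hj, hpot] at hle
  exact hp.ne' (le_antisymm hle bot_le)

lemma potential_retChain_eq_one (hsz : s ≠ z) (hq : ∀ k, totalRate q k ≠ ∞)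
    (hqz : totalRate q z = 0) (hμz : μ z = 0) (hμ1 : ∑' k, μ k = 1) (hp : 0 < pInf q s z)
    {l : S} (hl : l ≠ z) :
    potential (taboo {s} (jumpP (retChain q z μ))) (fun j => jumpP (retChain q z μ) j s) l = 1 := by
  set R := jumpP (retChain q z μ)
  set e : S → ℝ≥0∞ := ({z}ᶜ : Set S).indicator 1
  have he : e = (fun j => R j s) + kerOp (taboo {s} R) e := by
    ext j
    have hsplit := tsum_mul_eq_add_taboo R s e j
    rw [show e s = 1 by simp [e, hsz], mul_one] at hsplit
    rw [Pi.add_apply, ← hsplit]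
    by_cases hj : j = z
    · simp [e, R, hj, jumpP, retChain]
    · have hRz : R j z = 0 := by simp [R, jumpP, retChain]
      have hrow : ∑' l, R j l * e l = ∑' l, R j l :=
        tsum_congr fun l => by by_cases hlz : l = z <;> simp [e, hlz, hRz]
      rw [hrow, tsum_jumpP, totalRate_retChain hμz hμ1 hj,
        ENNReal.div_self (totalRate_ne_zero_of_pInf_pos hsz hp hj) (hq j)]
      simp [e, hj]
  have hpe : pInf q s z • e ≤ potential (taboo {s} R) (fun j => R j s) := by
    intro j
    by_cases hj : j = z
    · simp [e, hj]
    calc (pInf q s z • e) j = pInf q s z := by simp [e, hj]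
      _ ≤ pHit q s z j := iInf_le (fun k : {k : S // k ≠ z} => pHit q s z k) ⟨j, hj⟩
      _ = potential (taboo {s, z} (jumpP q)) (fun j => jumpP q j s) j := pHit_eq hsz hj
      _ ≤ potential (taboo {s} R) (fun j => R j s) j := by
          refine potential_mono (fun j l => ?_) (fun j => ?_) j
          · rw [taboo_jumpP_retChain hsz hqz hμz hμ1]; exact le_self_add
          · rw [show R j s = _ from jumpP_retChain hqz hμz hμ1 hsz j]; exact le_self_add
  have he_top : ∀ j, e j ≠ ∞ := fun j => by
    by_cases hj : j = z <;> simp [e, hj]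
  rw [potential_eq_of_smul_le he he_top hp.ne' hpe]
  simp [e, hl]

lemma totalRate_retChain_ne_top (hq : ∀ k, totalRate q k ≠ ∞) (hμz : μ z = 0)
    (hμ1 : ∑' k, μ k = 1) (j : S) : totalRate (retChain q z μ) j ≠ ∞ := by
  by_cases hj : j = z
  · simp [totalRate, retChain, hj]
  · rw [totalRate_retChain hμz hμ1 hj]; exact hq j

/-- Expected number of visits of the jump chain of `X^μ` to each state during one excursion
from `s`, time `0` included. -/
def excursionVisits (q : S → S → ℝ≥0∞) (z : S) (μ : S → ℝ≥0∞) (s : S) : S → ℝ≥0∞ :=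
  potential (flip (taboo {s} (jumpP (retChain q z μ)))) (Pi.single s 1)

lemma stationary_flow_eq_smul_excursionVisits (hsz : s ≠ z) (hq : ∀ k, totalRate q k ≠ ∞)
    (hqz : totalRate q z = 0) (hμz : μ z = 0) (hμ1 : ∑' k, μ k = 1) (hp : 0 < pInf q s z)
    {π : S → ℝ≥0∞} (hπ : IsStationaryRates (retChain q z μ) π) :
    (fun l => π l * totalRate (retChain q z μ) l) =
      (π s * totalRate (retChain q z μ) s) • excursionVisits q z μ s := by
  have hrate := totalRate_retChain_ne_top hq hμz hμ1
  refine cycle_formula (kerOp_flip_jumpP_of_isStationaryRates hπ hrate) ?_ fun l hl => ?_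
  · have hπs : π s ≤ 1 := hπ.1 ▸ ENNReal.le_tsum s
    exact ENNReal.mul_ne_top (ne_top_of_le_ne_top ENNReal.one_ne_top hπs) (hrate s)
  · refine potential_retChain_eq_one hsz hq hqz hμz hμ1 hp fun hlz => hl ?_
    simp [hlz, totalRate, retChain]

lemma stationary_eq_flow_mul_inv_totalRate (hsz : s ≠ z) (hq : ∀ k, totalRate q k ≠ ∞)
    (hμz : μ z = 0) (hμ1 : ∑' k, μ k = 1) (hp : 0 < pInf q s z) {π : S → ℝ≥0∞} (hπz : π z = 0)
    (l : S) : π l = π l * totalRate (retChain q z μ) l * (totalRate q l)⁻¹ := by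
  by_cases hl : l = z
  · simp [hl, hπz]
  · rw [totalRate_retChain hμz hμ1 hl, mul_assoc,
      ENNReal.mul_inv_cancel (totalRate_ne_zero_of_pInf_pos hsz hp hl) (hq l), mul_one]

lemma pairing_potential_jumpP_cemetery_le (hsz : s ≠ z) (hμ1 : ∑' k, μ k = 1) :
    pairing (({s, z} : Set S)ᶜ.indicator μ)
      (potential (taboo {s, z} (jumpP q)) (fun j => jumpP q j z)) ≤ 1 - pInf q s z :=
  calc _ ≤ ∑' l, μ l * (1 - pInf q s z) := ENNReal.tsum_le_tsum fun l => by
        by_cases hl : l ∈ ({s, z} : Set S)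
        · simp [hl]
        have hlz : l ≠ z := fun h => hl (by simp [h])
        rw [Set.indicator_of_mem (Set.mem_compl hl)]
        refine mul_le_mul_right ((potential_jumpP_cemetery_le hsz hlz).trans ?_) _
        exact tsub_le_tsub_left (iInf_le (fun k : {k : S // k ≠ z} => pHit q s z k) ⟨l, hlz⟩) 1
    _ = 1 - pInf q s z := by rw [ENNReal.tsum_mul_right, hμ1, one_mul]

-- An excursion from `s` restarts from `μ` at each passage through `z`. Weighting the restarts by
-- `β = (1 - p_s) / p`, which solves `β = (1 - p_s) + β (1 - p)`, gives a supersolution.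
lemma excursionVisits_le_potential_restart (hsz : s ≠ z) (hqz : totalRate q z = 0) (hμz : μ z = 0)
    (hμ1 : ∑' k, μ k = 1) (hp : 0 < pInf q s z) :
    excursionVisits q z μ s ≤
      potential (flip (taboo {s, z} (jumpP q)))
        (Pi.single s 1 + ((1 - pHit q s z s) / pInf q s z) • ({s, z} : Set S)ᶜ.indicator μ) := by
  refine potential_flip_le_of_le_add (d := fun j => jumpP q j z)
    (fun j l => (taboo_jumpP_retChain hsz hqz hμz hμ1 j l).le) _ ?_
  set p := pInf q s z
  have hp1 : p ≤ 1 := (iInf_le (fun k : {k : S // k ≠ z} => pHit q s z k) ⟨s, hsz⟩).trans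
    (pHit_le_one hsz hsz)
  rw [pairing_potential_flip, pairing_add_left, pairing_single, pairing_smul_left]
  calc _ ≤ (1 - pHit q s z s) + (1 - pHit q s z s) / p * (1 - p) :=
        add_le_add (potential_jumpP_cemetery_le hsz hsz)
          (mul_le_mul_right (pairing_potential_jumpP_cemetery_le hsz hμ1) _)
    _ = (1 - pHit q s z s) / p * (p + (1 - p)) := by
        rw [mul_add, ENNReal.div_mul_cancel hp.ne' (ne_top_of_le_ne_top ENNReal.one_ne_top hp1)]
    _ = (1 - pHit q s z s) / p := by rw [add_tsub_cancel_of_le hp1, mul_one]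

lemma tsum_subtype_stationary_eq (hsz : s ≠ z) (hq : ∀ k, totalRate q k ≠ ∞)
    (hqz : totalRate q z = 0) (hμz : μ z = 0) (hμ1 : ∑' k, μ k = 1) (hp : 0 < pInf q s z)
    {π : S → ℝ≥0∞} (hπ : IsStationaryRates (retChain q z μ) π) (hπz : π z = 0) (A : Set S) :
    ∑' k : A, π k = π s * totalRate (retChain q z μ) s *
      pairing (excursionVisits q z μ s) (A.indicator fun j => (totalRate q j)⁻¹) := by
  have hflow := stationary_flow_eq_smul_excursionVisits hsz hq hqz hμz hμ1 hp hπ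
  rw [_root_.tsum_subtype, ← pairing_smul_left, ← hflow]
  refine tsum_congr fun k => ?_
  by_cases hk : k ∈ A
  · simp only [Set.indicator_of_mem hk]
    exact stationary_eq_flow_mul_inv_totalRate hsz hq hμz hμ1 hp hπz k
  · simp [hk]

lemma pairing_excursionVisits_indicator_le (hsz : s ≠ z) (hqz : totalRate q z = 0) (hμz : μ z = 0)
    (hμ1 : ∑' k, μ k = 1) (hp : 0 < pInf q s z) (A : Set S) :
    pairing (excursionVisits q z μ s) (A.indicator fun j => (totalRate q j)⁻¹) ≤
      ∑' k : A, occT q s z k + (1 - pHit q s z s) / pInf q s z * muT q s z μ := by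
  refine (pairing_mono (excursionVisits_le_potential_restart hsz hqz hμz hμ1 hp) le_rfl).trans ?_
  rw [pairing_potential_flip, pairing_add_left, pairing_single, pairing_smul_left,
    tsum_occT_subtype hsz]
  gcongr
  refine (pairing_mono le_rfl (potential_mono le_rfl fun j => ?_)).trans
    (pairing_potential_le_muT hsz)
  exact Set.indicator_le_self _ _ j

lemma stationary_flow_mul_tsum_occT_le_one (hsz : s ≠ z) (hq : ∀ k, totalRate q k ≠ ∞)
    (hqz : totalRate q z = 0) (hμz : μ z = 0) (hμ1 : ∑' k, μ k = 1) (hp : 0 < pInf q s z)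
    {π : S → ℝ≥0∞} (hπ : IsStationaryRates (retChain q z μ) π) (hπz : π z = 0) :
    π s * totalRate (retChain q z μ) s * ∑' k, occT q s z k ≤ 1 := by
  have hQB : taboo {s, z} (jumpP q) ≤ taboo {s} (jumpP (retChain q z μ)) := fun j l => by
    rw [taboo_jumpP_retChain hsz hqz hμz hμ1]; exact le_self_add
  have hmass := tsum_subtype_stationary_eq hsz hq hqz hμz hμ1 hp hπ hπz Set.univ
  rw [tsum_univ, hπ.1, Set.indicator_univ] at hmass
  calc _ = π s * totalRate (retChain q z μ) s *
        pairing (potential (flip (taboo {s, z} (jumpP q))) (Pi.single s 1))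
          fun j => (totalRate q j)⁻¹ := by
        rw [tsum_occT hsz, pairing_potential_flip, pairing_single]
    _ ≤ _ := by gcongr; exact pairing_mono (potential_mono (fun l j => hQB j l) le_rfl) le_rfl
    _ = 1 := hmass.symm

end ReturnedChain

end

theorem stmt_3_general {S : Type*} (q : S → S → ℝ≥0∞) (z s : S)
    (hsz : s ≠ z) (hq : ∀ k, totalRate q k ≠ ⊤) (hqz : totalRate q z = 0)
    (hp : 0 < pInf q s z)
    (μ : S → ℝ≥0∞) (hμz : μ z = 0) (hμ1 : ∑' k, μ k = 1)
    (π : S → ℝ≥0∞) (hπ : IsStationaryRates (retChain q z μ) π) (hπz : π z = 0)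
    (Cζ : Set S) (ζ M : ℝ≥0∞)
    (hCζ : (∑' k : ↥Cζᶜ, occT q s z ↑k) ≤
      ζ * (1 - pHit q s z s) * (∑' k, occT q s z k))
    (hM : muT q s z μ ≤ M * (∑' k, occT q s z k)) :
    (∑' k : ↥Cζᶜ, π ↑k) ≤ (1 - pHit q s z s) * (ζ + M / pInf q s z) := by
  open ReturnedChain in
  · set ps := pHit q s z s
    set Ts := ∑' k, occT q s z k
    set νs := π s * totalRate (retChain q z μ) s
    have hcycle := pairing_excursionVisits_indicator_le hsz hqz hμz hμ1 hp Cζᶜ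
    have hone : νs * Ts ≤ 1 := stationary_flow_mul_tsum_occT_le_one hsz hq hqz hμz hμ1 hp hπ hπz
    rw [tsum_subtype_stationary_eq hsz hq hqz hμz hμ1 hp hπ hπz Cζᶜ]
    calc _ ≤ νs * (ζ * (1 - ps) * Ts + (1 - ps) / pInf q s z * (M * Ts)) := by
          gcongr
          exact hcycle.trans (add_le_add hCζ (mul_le_mul_right hM _))
      _ = νs * Ts * (ζ * (1 - ps) + (1 - ps) / pInf q s z * M) := by ring
      _ ≤ 1 * (ζ * (1 - ps) + (1 - ps) / pInf q s z * M) := by gcongr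
      _ = (1 - ps) * (ζ + M / pInf q s z) := by simp only [div_eq_mul_inv]; ring

/-- Lemma 2.3: `π^μ(C ∖ C_ζ) ≤ (1 - p_s)(ζ + M/p)` for every `μ` with `μ(T) ≤ M T_s`. -/
theorem stmt_3 {S : Type*} [Countable S] (q : S → S → ℝ≥0∞) (z s : S)
    (hsz : s ≠ z) (hq : ∀ k, totalRate q k ≠ ⊤) (hqz : totalRate q z = 0)
    (hp : 0 < pInf q s z) (hT : ∀ k, k ≠ z → excT q s z k < ⊤)
    (μ : S → ℝ≥0∞) (hμz : μ z = 0) (hμ1 : ∑' k, μ k = 1)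
    (π : S → ℝ≥0∞) (hπ : IsStationaryRates (retChain q z μ) π) (hπz : π z = 0)
    (Cζ : Set S) (hsC : s ∈ Cζ) (hzC : z ∉ Cζ) (ζ M : ℝ≥0∞)
    (hCζ : (∑' k : ↥Cζᶜ, occT q s z ↑k) ≤
      ζ * (1 - pHit q s z s) * (∑' k, occT q s z k))
    (hM : muT q s z μ ≤ M * (∑' k, occT q s z k)) :
    (∑' k : ↥Cζᶜ, π ↑k) ≤ (1 - pHit q s z s) * (ζ + M / pInf q s z) :=
  stmt_3_general q z s hsz hq hqz hp μ hμz hμ1 π hπ hπz Cζ ζ M hCζ hM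
end

section
/- Let f(r) = r^{-m} e^{β r²} for r > 0, with m > 1 and β > 0, and F_ρ(r) = ∫_ρ^r f(t) dt. Then for ρ < R with 2βR(R−ρ) ≥ 1 and any r ∈ [ρ, R], F_ρ(r)/F_ρ(R) ≤ (4β R^{m+1} / ((m−1) ρ^{m−1})) · e^{β(r² − R²)}. -/
/-!
On `[ρ, r]` the Gaussian factor is at most `e^{βr²}`, and `∫_ρ^∞ t^{-m} dt = ρ^{1-m}/(m-1)`
bounds the numerator. For the denominator, `t² ≥ 2Rt - R²` bounds the integrand from below by
`R^{-m} e^{β(2Rt - R²)}`, whose integral over `[ρ, R]` is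
`R^{-m} (e^{βR²} - e^{βR² - 2βR(R-ρ)}) / (2βR)`; the hypothesis `2βR(R-ρ) ≥ 1` and `e ≥ 2` make
the subtracted term at most half of the first, leaving `R^{-m} e^{βR²} / (4βR)`.
-/

open Real Set intervalIntegral

lemma intervalIntegrable_rpow_neg_mul_exp_sq {a b : ℝ} (ha : 0 < a) (hb : 0 < b) (m β : ℝ) :
    IntervalIntegrable (fun t : ℝ => t ^ (-m) * exp (β * t ^ 2)) MeasureTheory.volume a b :=
  (intervalIntegrable_rpow (Or.inr (notMem_uIcc_of_lt ha hb))).mul_continuousOn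
    (by fun_prop)

lemma integral_rpow_neg_le {m ρ r : ℝ} (hm : 1 < m) (hρ : 0 < ρ) (hρr : ρ ≤ r) :
    ∫ t in ρ..r, t ^ (-m) ≤ ρ ^ (1 - m) / (m - 1) := by
  rw [integral_rpow (Or.inr ⟨by linarith, notMem_uIcc_of_lt hρ (hρ.trans_le hρr)⟩),
    neg_add_eq_sub, ← neg_sub (ρ ^ (1 - m)), ← neg_sub m, neg_div_neg_eq]
  exact div_le_div_of_nonneg_right (sub_le_self _ (rpow_nonneg (hρ.le.trans hρr) _))
    (by linarith)

lemma integral_rpow_neg_mul_exp_sq_le {m β ρ r : ℝ} (hm : 1 < m) (hβ : 0 ≤ β) (hρ : 0 < ρ)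
    (hρr : ρ ≤ r) :
    ∫ t in ρ..r, t ^ (-m) * exp (β * t ^ 2) ≤ exp (β * r ^ 2) * (ρ ^ (1 - m) / (m - 1)) := by
  have hr : 0 < r := hρ.trans_le hρr
  calc ∫ t in ρ..r, t ^ (-m) * exp (β * t ^ 2)
      ≤ ∫ t in ρ..r, t ^ (-m) * exp (β * r ^ 2) := by
        refine integral_mono_on hρr (intervalIntegrable_rpow_neg_mul_exp_sq hρ hr m β)
          ((intervalIntegrable_rpow (Or.inr (notMem_uIcc_of_lt hρ hr))).mul_const _) ?_
        intro t ⟨hρt, htr⟩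
        have ht : 0 ≤ t := hρ.le.trans hρt
        gcongr
    _ = exp (β * r ^ 2) * ∫ t in ρ..r, t ^ (-m) := by rw [integral_mul_const, mul_comm]
    _ ≤ exp (β * r ^ 2) * (ρ ^ (1 - m) / (m - 1)) := by
        gcongr
        exact integral_rpow_neg_le hm hρ hρr

lemma exp_tangent_le_exp_sq {β : ℝ} (hβ : 0 ≤ β) (R t : ℝ) :
    exp (2 * β * R * t + -(β * R ^ 2)) ≤ exp (β * t ^ 2) := by
  gcongr
  nlinarith [mul_nonneg hβ (sq_nonneg (t - R))]

lemma integral_exp_tangent {β R : ℝ} (hβR : β * R ≠ 0) (a b : ℝ) :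
    ∫ t in a..b, exp (2 * β * R * t + -(β * R ^ 2)) =
      (exp (2 * β * R * b - β * R ^ 2) - exp (2 * β * R * a - β * R ^ 2)) / (2 * β * R) := by
  have h : 2 * β * R ≠ 0 := by rw [mul_assoc]; exact mul_ne_zero two_ne_zero hβR
  rw [integral_comp_mul_add (f := exp) h, integral_exp, smul_eq_mul, inv_mul_eq_div,
    ← sub_eq_add_neg, ← sub_eq_add_neg]


lemma exp_le_exp_div_two_of_one_le_sub {x y : ℝ} (h : 1 ≤ x - y) : exp y ≤ exp x / 2 :=
  calc exp y ≤ exp (x - 1) := exp_le_exp.2 (by linarith)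
    _ = exp x / exp 1 := exp_sub x 1
    _ ≤ exp x / 2 := by
        gcongr
        linarith [add_one_le_exp 1]

lemma div_le_integral_rpow_neg_mul_exp_sq {m β ρ R : ℝ} (hm : 0 ≤ m) (hβ : 0 < β) (hρ : 0 < ρ)
    (hρR : ρ ≤ R) (hcond : 1 ≤ 2 * β * R * (R - ρ)) :
    R ^ (-m) * exp (β * R ^ 2) / (4 * β * R) ≤ ∫ t in ρ..R, t ^ (-m) * exp (β * t ^ 2) := by
  have hR : 0 < R := hρ.trans_le hρR
  have hhalf : exp (2 * β * R * ρ - β * R ^ 2) ≤ exp (β * R ^ 2) / 2 :=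
    exp_le_exp_div_two_of_one_le_sub (by linarith)
  calc R ^ (-m) * exp (β * R ^ 2) / (4 * β * R)
      = R ^ (-m) * ((exp (β * R ^ 2) - exp (β * R ^ 2) / 2) / (2 * β * R)) := by
        field_simp
        ring
    _ ≤ R ^ (-m) * ((exp (2 * β * R * R - β * R ^ 2) - exp (2 * β * R * ρ - β * R ^ 2)) /
          (2 * β * R)) := by
        rw [show 2 * β * R * R - β * R ^ 2 = β * R ^ 2 by ring]
        gcongr
    _ = ∫ t in ρ..R, R ^ (-m) * exp (2 * β * R * t + -(β * R ^ 2)) := by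
        rw [integral_const_mul, integral_exp_tangent (by positivity)]
    _ ≤ ∫ t in ρ..R, t ^ (-m) * exp (β * t ^ 2) := by
        refine integral_mono_on hρR (Continuous.intervalIntegrable (by fun_prop) _ _)
          (intervalIntegrable_rpow_neg_mul_exp_sq hρ hR m β) ?_
        intro t ⟨hρt, htR⟩
        have ht : 0 < t := hρ.trans_le hρt
        exact mul_le_mul (rpow_le_rpow_of_nonpos ht htR (neg_nonpos.2 hm))
          (exp_tangent_le_exp_sq hβ.le R t) (exp_nonneg _) (rpow_nonneg ht.le _)

/-- The analytic core of the bound (p-bnd) in Section 4: for `f(t) = t^{-m} e^{βt²}`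
and `F_ρ(r) = ∫_ρ^r f`, if `2βR(R-ρ) ≥ 1` then
`F_ρ(r)/F_ρ(R) ≤ (4β R^{m+1}/((m-1)ρ^{m-1})) e^{β(r²-R²)}` for `r ∈ [ρ, R]`. -/
theorem stmt_15 (m β ρ R r : ℝ) (hm : 1 < m) (hβ : 0 < β) (hρ : 0 < ρ)
    (hρR : ρ < R) (hcond : 1 ≤ 2 * β * R * (R - ρ)) (hr : r ∈ Set.Icc ρ R) :
    (∫ t in ρ..r, t ^ (-m) * Real.exp (β * t ^ 2)) /
        (∫ t in ρ..R, t ^ (-m) * Real.exp (β * t ^ 2)) ≤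
      4 * β * R ^ (m + 1) / ((m - 1) * ρ ^ (m - 1)) *
        Real.exp (β * (r ^ 2 - R ^ 2)) := by
  obtain ⟨hρr, -⟩ := hr
  have hR : 0 < R := hρ.trans hρR
  have hm1 : 0 < m - 1 := by linarith
  calc (∫ t in ρ..r, t ^ (-m) * exp (β * t ^ 2)) / (∫ t in ρ..R, t ^ (-m) * exp (β * t ^ 2))
      ≤ exp (β * r ^ 2) * (ρ ^ (1 - m) / (m - 1)) /
          (R ^ (-m) * exp (β * R ^ 2) / (4 * β * R)) :=
        div_le_div₀ (by positivity) (integral_rpow_neg_mul_exp_sq_le hm hβ.le hρ hρr)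
          (by positivity) (div_le_integral_rpow_neg_mul_exp_sq (by linarith) hβ hρ hρR.le hcond)
    _ = 4 * β * R ^ (m + 1) / ((m - 1) * ρ ^ (m - 1)) * exp (β * (r ^ 2 - R ^ 2)) := by
        rw [show 1 - m = -(m - 1) by ring, rpow_neg hρ.le, rpow_neg hR.le, rpow_add_one hR.ne',
          mul_sub, exp_sub]
        field_simp
end
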